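/- Let f : [0,1] → ℝ be continuous, let s > 1, and for n ≥ 1 and 1 ≤ l ≤ 2ⁿ let O(f,n,l) = max over x ∈ [(l-1)/2ⁿ, l/2ⁿ] of |f(x) - f((l-1)/2ⁿ)|. If lim_{n→∞} Σ_{l=1}^{2ⁿ} O(f,n,l)^s = 0, then the Hausdorff dimension of the graph {(x,f(x)) : x ∈ [0,1]} is at most s. -/

import Mathlib

/-!
At scale `2⁻ⁿ` the graph is covered by the rectangles `R(n,l)`, of width `2⁻ⁿ` and height
`2 O(f,n,l)`. In the max metric of `ℝ × ℝ` the `s`-th power of the diameter of `R(n,l)` is at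
most `2^{-ns} + 2^s O(f,n,l)^s`, so the `s`-dimensional cost of the whole cover is at most
`2^{n(1-s)} + 2^s Σ_l O(f,n,l)^s`, which tends to `0` because `s > 1`. Hence the graph has
`s`-dimensional Hausdorff measure zero.
-/

open Filter Set MeasureTheory Metric Topology
open scoped ENNReal

theorem ediam_prod_le {X Y : Type*} [PseudoEMetricSpace X] [PseudoEMetricSpace Y]
    (s : Set X) (t : Set Y) : ediam (s ×ˢ t) ≤ max (ediam s) (ediam t) :=
  ediam_le fun p hp q hq => by
    rw [Prod.edist_eq]
    exact max_le_max (edist_le_ediam_of_mem hp.1 hq.1) (edist_le_ediam_of_mem hp.2 hq.2)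

theorem ediam_Icc_prod_Icc_rpow_le {a b c r s : ℝ} (hab : a ≤ b) (hr : 0 ≤ r) (hs : 0 ≤ s) :
    ediam (Icc a b ×ˢ Icc (c - r) (c + r)) ^ s ≤
      ENNReal.ofReal ((b - a) ^ s + 2 ^ s * r ^ s) := by
  have hdiam : ediam (Icc a b ×ˢ Icc (c - r) (c + r)) ≤
      max (ENNReal.ofReal (b - a)) (ENNReal.ofReal (2 * r)) := by
    simpa only [Real.ediam_Icc, add_sub_sub_cancel, ← two_mul] using
      ediam_prod_le (Icc a b) (Icc (c - r) (c + r))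
  calc ediam (Icc a b ×ˢ Icc (c - r) (c + r)) ^ s
      ≤ max (ENNReal.ofReal (b - a)) (ENNReal.ofReal (2 * r)) ^ s :=
        ENNReal.rpow_le_rpow hdiam hs
    _ = max (ENNReal.ofReal (b - a) ^ s) (ENNReal.ofReal (2 * r) ^ s) :=
        (ENNReal.monotone_rpow_of_nonneg hs).map_max
    _ ≤ ENNReal.ofReal (b - a) ^ s + ENNReal.ofReal (2 * r) ^ s := max_le le_self_add le_add_self
    _ = ENNReal.ofReal ((b - a) ^ s + 2 ^ s * r ^ s) := by
        rw [ENNReal.ofReal_rpow_of_nonneg (sub_nonneg.2 hab) hs,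
          ENNReal.ofReal_rpow_of_nonneg (by positivity) hs, Real.mul_rpow zero_le_two hr,
          ← ENNReal.ofReal_add (by positivity) (by positivity)]

theorem tendsto_mul_inv_rpow_atTop {s : ℝ} (hs : 1 < s) :
    Tendsto (fun x : ℝ => x * x⁻¹ ^ s) atTop (𝓝 0) := by
  refine (tendsto_rpow_neg_atTop (sub_pos.2 hs)).congr' ?_
  filter_upwards [eventually_gt_atTop 0] with x hx
  rw [Real.rpow_neg hx.le, Real.rpow_sub_one hx.ne', inv_div, Real.inv_rpow hx.le, div_eq_mul_inv]

theorem exists_mem_Icc_div_of_mem_Icc_zero_one {N : ℕ} (hN : 0 < N) {x : ℝ}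
    (hx : x ∈ Icc (0 : ℝ) 1) : ∃ l ∈ Finset.Icc 1 N, x ∈ Icc (((l : ℝ) - 1) / N) (l / N) := by
  have hN' : (0 : ℝ) < N := Nat.cast_pos.2 hN
  have hxN : 0 ≤ x * N := mul_nonneg hx.1 hN'.le
  refine ⟨max 1 ⌈x * N⌉₊, Finset.mem_Icc.2 ⟨le_max_left _ _, max_le hN ?_⟩, ?_, ?_⟩
  · exact Nat.ceil_le.2 (by nlinarith [hx.2])
  · rw [div_le_iff₀ hN']
    rcases le_total ⌈x * N⌉₊ 1 with h | h
    · rw [max_eq_left h]; push_cast; linarith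
    · rw [max_eq_right h]; linarith [Nat.ceil_lt_add_one hxN]
  · rw [le_div_iff₀ hN']
    exact (Nat.le_ceil _).trans (Nat.cast_le.2 (le_max_right _ _))

section Hausdorff

variable {X ι : Type*} [EMetricSpace X] [MeasurableSpace X] [BorelSpace X]

/-- Each diameter is bounded by the `s`-th root of the whole sum, so the covers have mesh
tending to `0`. -/
theorem hausdorffMeasure_eq_zero_of_tendsto_sum_ediam_rpow {s : ℝ} (hs : 0 < s) {G : Set X}
    (I : ℕ → Finset ι) (t : ℕ → ι → Set X) (hcover : ∀ᶠ n in atTop, G ⊆ ⋃ i ∈ I n, t n i)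
    (hsum : Tendsto (fun n => ∑ i ∈ I n, ediam (t n i) ^ s) atTop (𝓝 0)) : μH[s] G = 0 := by
  set σ := fun n => ∑ i ∈ I n, ediam (t n i) ^ s
  have hmesh : ∀ n, ∀ i ∈ I n, ediam (t n i) ≤ σ n ^ s⁻¹ := fun n i hi =>
    calc ediam (t n i) = (ediam (t n i) ^ s) ^ s⁻¹ := (ENNReal.rpow_rpow_inv hs.ne' _).symm
      _ ≤ σ n ^ s⁻¹ := ENNReal.rpow_le_rpow
          (Finset.single_le_sum (f := fun j => ediam (t n j) ^ s) (fun j _ => zero_le) hi)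
          (inv_nonneg.2 hs.le)
  have hr : Tendsto (fun n => σ n ^ s⁻¹) atTop (𝓝 0) := by
    simpa [Function.comp_def, ENNReal.zero_rpow_of_pos (inv_pos.2 hs)] using
      ((ENNReal.continuous_rpow_const (y := s⁻¹)).tendsto 0).comp hsum
  refine le_antisymm ?_ zero_le
  calc μH[s] G ≤ liminf (fun n => ∑ i : I n, ediam (t n i) ^ s) atTop :=
        Measure.hausdorffMeasure_le_liminf_sum s G _ hr (fun n (i : I n) => t n i)
          (Eventually.of_forall fun n i => hmesh n i i.2)
          (hcover.mono fun n hn => by simpa only [iUnion_subtype] using hn)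
    _ = 0 := by
        convert hsum.liminf_eq using 3 with n
        exact Finset.sum_coe_sort (I n) fun i => ediam (t n i) ^ s

theorem dimH_le_of_hausdorffMeasure_eq_zero {s : ℝ} (hs : 0 ≤ s) {G : Set X}
    (h : μH[s] G = 0) : dimH G ≤ ENNReal.ofReal s :=
  dimH_le_of_hausdorffMeasure_ne_top <| by
    rw [Real.coe_toNNReal s hs, h]
    exact ENNReal.zero_ne_top

end Hausdorff

section Dyadic

variable (f : ℝ → ℝ) (O : ℕ → ℕ → ℝ)

/-- The rectangle `R(n,l)` of the paper. -/
def dyadicGraphBox (n l : ℕ) : Set (ℝ × ℝ) :=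
  Icc (((l : ℝ) - 1) / 2 ^ n) ((l : ℝ) / 2 ^ n) ×ˢ
    Icc (f (((l : ℝ) - 1) / 2 ^ n) - O n l) (f (((l : ℝ) - 1) / 2 ^ n) + O n l)

def BoundsDyadicOscillation (n : ℕ) : Prop :=
  ∀ l ∈ Finset.Icc (1 : ℕ) (2 ^ n), ∀ x ∈ Icc (((l : ℝ) - 1) / 2 ^ n) ((l : ℝ) / 2 ^ n),
    |f x - f (((l : ℝ) - 1) / 2 ^ n)| ≤ O n l

variable {f O} {n : ℕ}

theorem graph_subset_biUnion_dyadicGraphBox (hosc : BoundsDyadicOscillation f O n) :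
    {q : ℝ × ℝ | ∃ x ∈ Icc (0 : ℝ) 1, q = (x, f x)} ⊆
      ⋃ l ∈ Finset.Icc 1 (2 ^ n), dyadicGraphBox f O n l := by
  rintro _ ⟨x, hx, rfl⟩
  obtain ⟨l, hl, hxl⟩ := exists_mem_Icc_div_of_mem_Icc_zero_one (Nat.two_pow_pos n) hx
  push_cast at hxl
  have := abs_le.1 (hosc l hl x hxl)
  exact mem_biUnion hl ⟨hxl, by constructor <;> linarith⟩

theorem BoundsDyadicOscillation.nonneg (hosc : BoundsDyadicOscillation f O n) :
    ∀ l ∈ Finset.Icc 1 (2 ^ n), 0 ≤ O n l := fun l hl =>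
  (abs_nonneg _).trans <| hosc l hl _ <| left_mem_Icc.2 <| by gcongr; linarith

theorem sum_ediam_dyadicGraphBox_rpow_le (hosc : BoundsDyadicOscillation f O n) {s : ℝ}
    (hs : 0 ≤ s) :
    ∑ l ∈ Finset.Icc 1 (2 ^ n), ediam (dyadicGraphBox f O n l) ^ s ≤
      ENNReal.ofReal (2 ^ n * ((2 ^ n)⁻¹) ^ s + 2 ^ s * ∑ l ∈ Finset.Icc 1 (2 ^ n), O n l ^ s) := by
  have hO := hosc.nonneg
  have hwidth : ∀ l : ℕ, (l : ℝ) / 2 ^ n - ((l : ℝ) - 1) / 2 ^ n = (2 ^ n)⁻¹ := fun l => by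
    rw [div_sub_div_same, sub_sub_cancel, one_div]
  calc ∑ l ∈ Finset.Icc 1 (2 ^ n), ediam (dyadicGraphBox f O n l) ^ s
      ≤ ∑ l ∈ Finset.Icc 1 (2 ^ n), ENNReal.ofReal (((2 ^ n)⁻¹) ^ s + 2 ^ s * O n l ^ s) :=
        Finset.sum_le_sum fun l hl => by
          have hle : ((l : ℝ) - 1) / 2 ^ n ≤ l / 2 ^ n := by gcongr; linarith
          rw [← hwidth l]
          exact ediam_Icc_prod_Icc_rpow_le hle (hO l hl) hs
    _ = ENNReal.ofReal (∑ l ∈ Finset.Icc 1 (2 ^ n), (((2 ^ n)⁻¹) ^ s + 2 ^ s * O n l ^ s)) :=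
        (ENNReal.ofReal_sum_of_nonneg fun l hl => by have := hO l hl; positivity).symm
    _ = _ := by
        rw [Finset.sum_add_distrib, Finset.sum_const, Nat.card_Icc, ← Finset.mul_sum,
          nsmul_eq_mul]
        simp

end Dyadic

theorem dimH_graph_le_of_oscillation_general (f : ℝ → ℝ)
    (s : ℝ) (hs : 1 < s) (O : ℕ → ℕ → ℝ)
    (hO : ∀ n : ℕ, 1 ≤ n → ∀ l : ℕ, 1 ≤ l → l ≤ 2^n →
      IsGreatest ((fun x => |f x - f (((l:ℝ)-1)/2^n)|) ''
        Set.Icc (((l:ℝ)-1)/2^n) ((l:ℝ)/2^n)) (O n l))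
    (hlim : Filter.Tendsto (fun n => ∑ l ∈ Finset.Icc 1 (2^n), O n l ^ s)
      Filter.atTop (nhds 0)) :
    dimH {q : ℝ × ℝ | ∃ x ∈ Set.Icc (0:ℝ) 1, q = (x, f x)} ≤ ENNReal.ofReal s := by
  have hosc : ∀ n, 1 ≤ n → BoundsDyadicOscillation f O n := fun n hn l hl x hx =>
    (hO n hn l (Finset.mem_Icc.1 hl).1 (Finset.mem_Icc.1 hl).2).2 ⟨x, hx, rfl⟩
  have hbound : Tendsto (fun n : ℕ => ENNReal.ofReal
      (2 ^ n * ((2 ^ n)⁻¹) ^ s + 2 ^ s * ∑ l ∈ Finset.Icc 1 (2 ^ n), O n l ^ s)) atTop (𝓝 0) := by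
    simpa using ENNReal.tendsto_ofReal <|
      ((tendsto_mul_inv_rpow_atTop hs).comp (tendsto_pow_atTop_atTop_of_one_lt one_lt_two)).add
        (hlim.const_mul _)
  refine dimH_le_of_hausdorffMeasure_eq_zero (by linarith) <|
    hausdorffMeasure_eq_zero_of_tendsto_sum_ediam_rpow (by linarith)
      (fun n => Finset.Icc 1 (2 ^ n)) (dyadicGraphBox f O) ?_ ?_
  · filter_upwards [eventually_ge_atTop 1] with n hn
    exact graph_subset_biUnion_dyadicGraphBox (hosc n hn)
  · refine tendsto_of_tendsto_of_tendsto_of_le_of_le' tendsto_const_nhds hbound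
      (.of_forall fun _ => zero_le) ?_
    filter_upwards [eventually_ge_atTop 1] with n hn
    exact sum_ediam_dyadicGraphBox_rpow_le (hosc n hn) (by linarith)

/-- Covering lemma: if the `s`-th powers of the dyadic oscillations of `f`
tend to `0`, then the Hausdorff dimension of the graph of `f` is at most `s`. -/
theorem dimH_graph_le_of_oscillation (f : ℝ → ℝ) (hf : ContinuousOn f (Set.Icc 0 1))
    (s : ℝ) (hs : 1 < s) (O : ℕ → ℕ → ℝ)
    (hO : ∀ n : ℕ, 1 ≤ n → ∀ l : ℕ, 1 ≤ l → l ≤ 2^n →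
      IsGreatest ((fun x => |f x - f (((l:ℝ)-1)/2^n)|) ''
        Set.Icc (((l:ℝ)-1)/2^n) ((l:ℝ)/2^n)) (O n l))
    (hlim : Filter.Tendsto (fun n => ∑ l ∈ Finset.Icc 1 (2^n), O n l ^ s)
      Filter.atTop (nhds 0)) :
    dimH {q : ℝ × ℝ | ∃ x ∈ Set.Icc (0:ℝ) 1, q = (x, f x)} ≤ ENNReal.ofReal s :=
  dimH_graph_le_of_oscillation_general f s hs O hO hlim
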